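/- arXiv:1810.02395 — 3 statements merged into one kernel-verified Lean document; each statement's English description precedes it below -/
import Mathlib

section
/- $L^2$-boundedness of the Laplace transform: For every $\phi\in L^2(0,\infty)$, the Laplace transform $\mathcal{L}\{\phi\}(x)=\int_0^\infty e^{-kx}\phi(k)\,dk$ defines a function in $L^2(0,\infty)$ and satisfies $\|\mathcal{L}\{\phi\}\|_{L^2(0,\infty)}\le\sqrt{\pi}\,\|\phi\|_{L^2(0,\infty)}$. -/
/-!
Schur's test with the weight `t ^ (-1/2)`: since `∫₀^∞ e^{-xk} k^{-1/2} dk = Γ(1/2) x^{-1/2}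
= √π x^{-1/2}`, Cauchy–Schwarz against this weight gives
`|ℒφ(x)|² ≤ √π x^{-1/2} ∫₀^∞ e^{-xk} k^{1/2} |φ(k)|² dk`; integrating in `x` and using the same
identity once more (the kernel `e^{-xk}` is symmetric) yields `‖ℒφ‖₂² ≤ π ‖φ‖₂²`.
-/

open MeasureTheory Set Function
open scoped ENNReal

namespace ENNReal

variable {α β : Type*} [MeasurableSpace α] [MeasurableSpace β] {μ : Measure α} {ν : Measure β}

theorem lintegral_mul_sq_le {f g : α → ℝ≥0∞} (hf : AEMeasurable f μ) (hg : AEMeasurable g μ) :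
    (∫⁻ a, f a * g a ∂μ) ^ 2 ≤ (∫⁻ a, f a ^ 2 ∂μ) * ∫⁻ a, g a ^ 2 ∂μ := by
  have holder := lintegral_mul_le_Lp_mul_Lq μ Real.HolderConjugate.two_two hf hg
  simp only [Pi.mul_apply, rpow_two] at holder
  calc (∫⁻ a, f a * g a ∂μ) ^ 2
      ≤ ((∫⁻ a, f a ^ 2 ∂μ) ^ (1 / 2 : ℝ) * (∫⁻ a, g a ^ 2 ∂μ) ^ (1 / 2 : ℝ)) ^ 2 := by gcongr
    _ = (∫⁻ a, f a ^ 2 ∂μ) * ∫⁻ a, g a ^ 2 ∂μ := by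
      rw [mul_pow, ← rpow_two, ← rpow_two, ← rpow_mul, ← rpow_mul]
      norm_num

theorem lintegral_mul_sq_le_of_weight {K f w : α → ℝ≥0∞} (hK : AEMeasurable K μ)
    (hf : AEMeasurable f μ) (hw : AEMeasurable w μ) (hw₀ : ∀ᵐ a ∂μ, w a ≠ 0)
    (hw_top : ∀ᵐ a ∂μ, w a ≠ ∞) :
    (∫⁻ a, K a * f a ∂μ) ^ 2 ≤ (∫⁻ a, K a * w a ∂μ) * ∫⁻ a, K a * (f a ^ 2 / w a) ∂μ := by
  have sqrt_sq (x : ℝ≥0∞) : (x ^ (2⁻¹ : ℝ)) ^ 2 = x := by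
    rw [← rpow_two, rpow_inv_rpow two_ne_zero]
  have split : ∀ᵐ a ∂μ, K a * f a =
      (K a * w a) ^ (2⁻¹ : ℝ) * (K a * (f a ^ 2 / w a)) ^ (2⁻¹ : ℝ) := by
    filter_upwards [hw₀, hw_top] with a h₀ h_top
    rw [← mul_rpow_of_nonneg _ _ (by norm_num),
      show K a * w a * (K a * (f a ^ 2 / w a)) = (K a * f a) ^ 2 by
        rw [mul_mul_mul_comm, mul_comm (w a), ENNReal.div_mul_cancel h₀ h_top]; ring,
      ← rpow_two, rpow_rpow_inv two_ne_zero]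
  rw [lintegral_congr_ae split]
  convert lintegral_mul_sq_le
    (f := fun a ↦ (K a * w a) ^ (2⁻¹ : ℝ)) (g := fun a ↦ (K a * (f a ^ 2 / w a)) ^ (2⁻¹ : ℝ))
    (by fun_prop) (by fun_prop) using 3 <;> simp only [sqrt_sq]

theorem lintegral_lintegral_mul_sq_le_of_schur [SFinite μ] [SFinite ν] {K : α → β → ℝ≥0∞}
    (hK : Measurable (uncurry K)) {p : α → ℝ≥0∞} {q : β → ℝ≥0∞} (hp : AEMeasurable p μ)
    (hq : AEMeasurable q ν) (hq₀ : ∀ᵐ y ∂ν, q y ≠ 0) (hq_top : ∀ᵐ y ∂ν, q y ≠ ∞)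
    {C₁ C₂ : ℝ≥0∞} (h₁ : ∀ᵐ x ∂μ, ∫⁻ y, K x y * q y ∂ν ≤ C₁ * p x)
    (h₂ : ∀ᵐ y ∂ν, ∫⁻ x, K x y * p x ∂μ ≤ C₂ * q y) {f : β → ℝ≥0∞} (hf : AEMeasurable f ν) :
    ∫⁻ x, (∫⁻ y, K x y * f y ∂ν) ^ 2 ∂μ ≤ C₁ * C₂ * ∫⁻ y, f y ^ 2 ∂ν := by
  have hKpf : AEMeasurable (fun z : α × β ↦ K z.1 z.2 * p z.1 * (f z.2 ^ 2 / q z.2)) (μ.prod ν) :=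
    (hK.aemeasurable.mul hp.comp_fst).mul ((hf.pow_const 2).div hq).comp_snd
  calc ∫⁻ x, (∫⁻ y, K x y * f y ∂ν) ^ 2 ∂μ
      ≤ ∫⁻ x, (∫⁻ y, K x y * q y ∂ν) * ∫⁻ y, K x y * (f y ^ 2 / q y) ∂ν ∂μ :=
        lintegral_mono fun x ↦ lintegral_mul_sq_le_of_weight hK.of_uncurry_left.aemeasurable
          hf hq hq₀ hq_top
    _ ≤ ∫⁻ x, C₁ * ∫⁻ y, K x y * p x * (f y ^ 2 / q y) ∂ν ∂μ := by
        refine lintegral_mono_ae ?_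
        filter_upwards [h₁] with x hx
        calc _ ≤ C₁ * p x * ∫⁻ y, K x y * (f y ^ 2 / q y) ∂ν := by gcongr
          _ = _ := by
            rw [mul_assoc, ← lintegral_const_mul'' _ (by fun_prop)]
            simp only [mul_comm (p x), mul_assoc]
    _ = C₁ * ∫⁻ y, (∫⁻ x, K x y * p x ∂μ) * (f y ^ 2 / q y) ∂ν := by
        rw [lintegral_const_mul'' _ hKpf.lintegral_prod_right', lintegral_lintegral_swap hKpf]
        refine congrArg (C₁ * ·) (lintegral_congr fun y ↦ ?_)
        dsimp only
        exact lintegral_mul_const'' _ (hK.of_uncurry_right.aemeasurable.fun_mul hp)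
    _ ≤ C₁ * ∫⁻ y, C₂ * q y * (f y ^ 2 / q y) ∂ν := by
        gcongr C₁ * ?_
        exact lintegral_mono_ae (h₂.mono fun y hy ↦ by gcongr)
    _ = C₁ * C₂ * ∫⁻ y, f y ^ 2 ∂ν := by
        rw [mul_assoc C₁, ← lintegral_const_mul'' C₂ (hf.pow_const 2)]
        congr 1
        refine lintegral_congr_ae ?_
        filter_upwards [hq₀, hq_top] with y h₀ h_top
        rw [mul_assoc, ENNReal.mul_div_cancel h₀ h_top]

end ENNReal

theorem eLpNorm_two_sq {α ε : Type*} [MeasurableSpace α] {μ : Measure α} [ENorm ε]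
    (f : α → ε) : eLpNorm f 2 μ ^ 2 = ∫⁻ x, ‖f x‖ₑ ^ 2 ∂μ := by
  simpa using eLpNorm_nnreal_pow_eq_lintegral (f := f) (μ := μ) (p := 2) two_ne_zero

section Laplace

open Real

theorem lintegral_exp_neg_mul_mul_rpow_Ioi {a r : ℝ} (ha : 0 < a) (hr : 0 < r) :
    ∫⁻ t in Ioi 0, ENNReal.ofReal (exp (-(r * t))) * ENNReal.ofReal (t ^ (a - 1)) =
      ENNReal.ofReal (Gamma a) * ENNReal.ofReal (r ^ (-a)) := by
  have hint : IntegrableOn (fun t ↦ t ^ (a - 1) * exp (-(r * t))) (Ioi 0) := by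
    simpa only [rpow_one, neg_mul] using
      integrableOn_rpow_mul_exp_neg_mul_rpow (p := 1) (by linarith) one_pos hr
  have hnonneg : ∀ᵐ t ∂volume.restrict (Ioi 0), 0 ≤ t ^ (a - 1) * exp (-(r * t)) :=
    (ae_restrict_mem measurableSet_Ioi).mono fun t ht ↦
      mul_nonneg (rpow_nonneg (le_of_lt ht) _) (exp_pos _).le
  calc ∫⁻ t in Ioi 0, ENNReal.ofReal (exp (-(r * t))) * ENNReal.ofReal (t ^ (a - 1))
      = ENNReal.ofReal (∫ t in Ioi 0, t ^ (a - 1) * exp (-(r * t))) := by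
        rw [ofReal_integral_eq_lintegral_ofReal hint hnonneg]
        refine setLIntegral_congr_fun measurableSet_Ioi fun t ht ↦ ?_
        rw [mul_comm, ENNReal.ofReal_mul (rpow_nonneg (le_of_lt ht) _)]
    _ = ENNReal.ofReal (Gamma a) * ENNReal.ofReal (r ^ (-a)) := by
        rw [integral_rpow_mul_exp_neg_mul_Ioi ha hr, one_div, inv_rpow hr.le, ← rpow_neg hr.le,
          mul_comm, ENNReal.ofReal_mul (Gamma_pos_of_pos ha).le]

theorem lintegral_exp_neg_mul_mul_rpow_neg_half_Ioi {r : ℝ} (hr : 0 < r) :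
    ∫⁻ t in Ioi 0, ENNReal.ofReal (exp (-(r * t))) * ENNReal.ofReal (t ^ (-(1 / 2) : ℝ)) =
      ENNReal.ofReal √π * ENNReal.ofReal (r ^ (-(1 / 2) : ℝ)) := by
  have h := lintegral_exp_neg_mul_mul_rpow_Ioi one_half_pos hr
  rwa [Gamma_one_half_eq, show (1 / 2 : ℝ) - 1 = -(1 / 2) by norm_num] at h

theorem aestronglyMeasurable_laplace {φ : ℝ → ℂ}
    (hφ : AEStronglyMeasurable φ (volume.restrict (Ioi 0))) {μ : Measure ℝ} [SFinite μ] :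
    AEStronglyMeasurable (fun x : ℝ ↦ ∫ k in Ioi (0 : ℝ), Complex.exp (-((k : ℂ) * x)) * φ k) μ :=
  AEStronglyMeasurable.integral_prod_right'
    (f := fun z : ℝ × ℝ ↦ Complex.exp (-((z.2 : ℂ) * z.1)) * φ z.2)
    ((by fun_prop : Continuous fun z : ℝ × ℝ ↦ Complex.exp (-((z.2 : ℂ) * z.1))
      ).aestronglyMeasurable.mul hφ.comp_snd)

theorem enorm_laplace_le (φ : ℝ → ℂ) (x : ℝ) :
    ‖∫ k in Ioi (0 : ℝ), Complex.exp (-((k : ℂ) * x)) * φ k‖ₑ ≤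
      ∫⁻ k in Ioi 0, ENNReal.ofReal (exp (-(x * k))) * ‖φ k‖ₑ := by
  refine (enorm_integral_le_lintegral_enorm _).trans_eq (lintegral_congr fun k ↦ ?_)
  rw [enorm_mul, ← ofReal_norm (Complex.exp _), Complex.norm_exp, mul_comm x]
  norm_cast

theorem lintegral_enorm_laplace_sq_le {φ : ℝ → ℂ}
    (hφ : AEStronglyMeasurable φ (volume.restrict (Ioi 0))) :
    ∫⁻ x in Ioi (0 : ℝ), ‖∫ k in Ioi (0 : ℝ), Complex.exp (-((k : ℂ) * x)) * φ k‖ₑ ^ 2 ≤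
      ENNReal.ofReal √π * ENNReal.ofReal √π * ∫⁻ k in Ioi 0, ‖φ k‖ₑ ^ 2 := by
  have weight_ne_zero : ∀ᵐ t ∂volume.restrict (Ioi 0), ENNReal.ofReal (t ^ (-(1 / 2) : ℝ)) ≠ 0 :=
    (ae_restrict_mem measurableSet_Ioi).mono fun t ht ↦
      (ENNReal.ofReal_pos.mpr (rpow_pos_of_pos ht _)).ne'
  have kernel_weight (r : ℝ) (hr : r ∈ Ioi 0) := (lintegral_exp_neg_mul_mul_rpow_neg_half_Ioi hr).le
  refine (lintegral_mono fun x ↦ pow_le_pow_left' (enorm_laplace_le φ x) 2).trans ?_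
  refine ENNReal.lintegral_lintegral_mul_sq_le_of_schur (by fun_prop) (by fun_prop) (by fun_prop)
    weight_ne_zero (ae_of_all _ fun _ ↦ ENNReal.ofReal_ne_top)
    ((ae_restrict_mem measurableSet_Ioi).mono kernel_weight) ?_ hφ.enorm
  filter_upwards [ae_restrict_mem measurableSet_Ioi] with k hk
  simpa only [mul_comm _ k] using kernel_weight k hk

end Laplace

/-- **$L^2$-boundedness of the Laplace transform.**
For every `φ ∈ L²(0,∞)`, the Laplace transform `x ↦ ∫_0^∞ e^{-k x} φ(k) dk`
belongs to `L²(0,∞)` and its `L²` norm is at most `√π` times that of `φ`. -/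
theorem laplace_transform_L2_bound (φ : ℝ → ℂ)
    (hφ : MemLp φ 2 (volume.restrict (Ioi (0:ℝ)))) :
    MemLp (fun x : ℝ => ∫ k in Ioi (0:ℝ), Complex.exp (-((k:ℂ) * (x:ℂ))) * φ k) 2
      (volume.restrict (Ioi (0:ℝ))) ∧
    eLpNorm (fun x : ℝ => ∫ k in Ioi (0:ℝ), Complex.exp (-((k:ℂ) * (x:ℂ))) * φ k) 2
        (volume.restrict (Ioi (0:ℝ)))
      ≤ ENNReal.ofReal (Real.sqrt Real.pi) * eLpNorm φ 2 (volume.restrict (Ioi (0:ℝ))) := by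
  have hle : eLpNorm (fun x : ℝ ↦ ∫ k in Ioi (0 : ℝ), Complex.exp (-((k : ℂ) * x)) * φ k) 2
        (volume.restrict (Ioi 0)) ≤
      ENNReal.ofReal √Real.pi * eLpNorm φ 2 (volume.restrict (Ioi 0)) := by
    rw [← ENNReal.pow_le_pow_left_iff two_ne_zero, mul_pow, eLpNorm_two_sq, eLpNorm_two_sq, sq]
    exact lintegral_enorm_laplace_sq_le hφ.aestronglyMeasurable
  refine ⟨⟨aestronglyMeasurable_laplace hφ.aestronglyMeasurable, hle.trans_lt ?_⟩, hle⟩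
  exact ENNReal.mul_lt_top ENNReal.ofReal_lt_top hφ.eLpNorm_lt_top
end

section
/- Kernel integral bound: For $\beta\in(0,1)$, $k_1\in\mathbb{R}$ and $k_2>0$, define $I(k_1,k_2,\beta)=\int_{z_1\in\mathbb{R}}\int_{z_2=0}^\infty\frac{|e^{ik_1z_1-k_2z_2}-1|^2}{(z_1^2+z_2^2)^{1+\beta}}\,dz_2\,dz_1$. Then there exists a constant $c_\beta>0$ depending only on $\beta$ such that $I(k_1,k_2,\beta)\le c_\beta\,(k_1^2+k_2^2)^\beta$ for all $k_1\in\mathbb{R}$ and $k_2>0$. -/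
open MeasureTheory Set

open scoped ENNReal

/-!
Since `Re (i k₁ z₁ - k₂ z₂) ≤ 0`, the numerator is at most `min 4 (|k|² |z|²)`. Extending the
`z₂`-integral to all of `ℝ` and passing to polar coordinates bounds `I` by
`2π ∫₀^∞ min 4 (|k|² r²) r^(-1-2β) dr`; splitting at `r = 1/|k|` shows this radial integral is at
most `(1/(2-2β) + 2/β) |k|^(2β)`.
-/

theorem Complex.norm_exp_sub_one_le_norm {z : ℂ} (hz : z.re ≤ 0) :
    ‖exp z - 1‖ ≤ ‖z‖ := by
  have h := (convex_halfSpace_re_le (0 : ℝ)).norm_image_sub_le_of_norm_hasDerivWithin_le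
    (f := exp) (C := 1) (fun w _ => (hasDerivAt_exp w).hasDerivWithinAt)
    (fun w hw => by simpa [norm_exp] using hw) (x := 0) (by simp) hz
  simpa using h

theorem Complex.norm_exp_sub_one_le_two {z : ℂ} (hz : z.re ≤ 0) : ‖exp z - 1‖ ≤ 2 := by
  calc ‖exp z - 1‖ ≤ ‖exp z‖ + ‖(1 : ℂ)‖ := norm_sub_le _ _
    _ ≤ 1 + 1 := by gcongr; simpa [norm_exp] using hz; simp
    _ = 2 := by norm_num

theorem sq_norm_exp_sub_one_le_min (k₁ k₂ z₁ z₂ : ℝ) (h : 0 ≤ k₂ * z₂) :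
    ‖Complex.exp (Complex.I * k₁ * z₁ - k₂ * z₂) - 1‖ ^ 2 ≤
      min 4 ((k₁ ^ 2 + k₂ ^ 2) * (z₁ ^ 2 + z₂ ^ 2)) := by
  set w : ℂ := Complex.I * k₁ * z₁ - k₂ * z₂
  have hre : w.re ≤ 0 := by simpa [w] using h
  have hw : ‖w‖ ^ 2 = (k₁ * z₁) ^ 2 + (k₂ * z₂) ^ 2 := by
    rw [Complex.sq_norm, Complex.normSq_apply]; simp [w]; ring
  refine le_min ?_ ?_
  · nlinarith [Complex.norm_exp_sub_one_le_two hre, norm_nonneg (Complex.exp w - 1)]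
  · calc _ ≤ ‖w‖ ^ 2 := by gcongr; exact Complex.norm_exp_sub_one_le_norm hre
      _ ≤ _ := by rw [hw]; nlinarith [sq_nonneg (k₁ * z₂), sq_nonneg (k₂ * z₁)]

theorem integral_integral_le_of_lintegral_lintegral_enorm_le {X Y : Type*}
    [MeasurableSpace X] [MeasurableSpace Y] {μ : Measure X} {ν : Measure Y} {f : X → Y → ℝ}
    {C : ℝ} (hC : 0 ≤ C) (h : ∫⁻ x, ∫⁻ y, ‖f x y‖ₑ ∂ν ∂μ ≤ ENNReal.ofReal C) :
    ∫ x, ∫ y, f x y ∂ν ∂μ ≤ C := by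
  refine (le_abs_self _).trans ((ENNReal.ofReal_le_ofReal_iff hC).1 ?_)
  rw [← Real.enorm_eq_ofReal_abs]
  exact (enorm_integral_le_lintegral_enorm _).trans
    ((lintegral_mono fun x => enorm_integral_le_lintegral_enorm _).trans h)

theorem lintegral_comp_sq_add_sq {h : ℝ → ℝ≥0∞} (hh : Measurable h) :
    ∫⁻ p : ℝ × ℝ, h (p.1 ^ 2 + p.2 ^ 2) =
      ENNReal.ofReal (2 * Real.pi) * ∫⁻ r in Ioi 0, ENNReal.ofReal r * h (r ^ 2) := by
  rw [← lintegral_comp_polarCoord_symm, polarCoord_target, Measure.volume_eq_prod,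
    ← Measure.prod_restrict]
  have hpolar : ∀ p : ℝ × ℝ,
      (polarCoord.symm p).1 ^ 2 + (polarCoord.symm p).2 ^ 2 = p.1 ^ 2 := by
    intro p
    simp only [polarCoord_symm_apply]
    linear_combination p.1 ^ 2 * Real.cos_sq_add_sin_sq p.2
  simp_rw [hpolar, smul_eq_mul]
  rw [lintegral_prod _ (by fun_prop)]
  simp_rw [lintegral_const, Measure.restrict_apply MeasurableSet.univ, univ_inter,
    Real.volume_Ioo]
  rw [← lintegral_const_mul _ (by fun_prop)]
  simp_rw [two_mul, sub_neg_eq_add, mul_comm (ENNReal.ofReal _) (_ * _)]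

theorem lintegral_Ioc_zero_rpow {a s : ℝ} (ha : 0 ≤ a) (hs : -1 < s) :
    ∫⁻ r in Ioc 0 a, ENNReal.ofReal (r ^ s) = ENNReal.ofReal (a ^ (s + 1) / (s + 1)) := by
  rw [← ofReal_integral_eq_lintegral_ofReal (intervalIntegral.intervalIntegrable_rpow' hs).1
    ((ae_restrict_mem measurableSet_Ioc).mono fun r hr => Real.rpow_nonneg hr.1.le s),
    ← intervalIntegral.integral_of_le ha, integral_rpow (Or.inl hs),
    Real.zero_rpow (by linarith), sub_zero]

theorem lintegral_Ioi_rpow {a s : ℝ} (ha : 0 < a) (hs : s < -1) :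
    ∫⁻ r in Ioi a, ENNReal.ofReal (r ^ s) = ENNReal.ofReal (-a ^ (s + 1) / (s + 1)) := by
  rw [← ofReal_integral_eq_lintegral_ofReal (integrableOn_Ioi_rpow_of_lt hs ha)
    ((ae_restrict_mem measurableSet_Ioi).mono fun r (hr : a < r) => Real.rpow_nonneg
      (ha.trans hr).le s), integral_Ioi_rpow_of_lt hs ha]

theorem mul_min_div_sq_rpow {r : ℝ} (hr : 0 < r) (c K β : ℝ) :
    r * (min c (K * r ^ 2) / (r ^ 2) ^ (1 + β)) =
      min (c * r ^ (-(1 + 2 * β))) (K * r ^ (1 - 2 * β)) := by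
  have hsq : (r ^ 2) ^ (1 + β) = r ^ (2 + 2 * β) := by
    rw [← Real.rpow_natCast, ← Real.rpow_mul hr.le]; push_cast; ring_nf
  rw [hsq, mul_div_left_comm, div_eq_mul_inv, ← Real.rpow_neg hr.le, mul_comm r,
    ← Real.rpow_add_one hr.ne', min_mul_of_nonneg _ _ (Real.rpow_nonneg hr.le _), mul_assoc,
    ← Real.rpow_natCast, ← Real.rpow_add hr]
  ring_nf

theorem lintegral_Ioi_mul_min_div_rpow_le {β K : ℝ} (hβ : β ∈ Ioo 0 1) (hK : 0 < K) :
    ∫⁻ r in Ioi 0,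
        ENNReal.ofReal r * ENNReal.ofReal (min 4 (K * r ^ 2) / (r ^ 2) ^ (1 + β)) ≤
      ENNReal.ofReal ((1 / (2 - 2 * β) + 2 / β) * K ^ β) := by
  obtain ⟨hβ0, hβ1⟩ := hβ
  have hprofile : ∀ r > (0 : ℝ), ENNReal.ofReal r * ENNReal.ofReal
      (min 4 (K * r ^ 2) / (r ^ 2) ^ (1 + β)) =
      ENNReal.ofReal (min (4 * r ^ (-(1 + 2 * β))) (K * r ^ (1 - 2 * β))) := fun r hr => by
    rw [← ENNReal.ofReal_mul hr.le, mul_min_div_sq_rpow hr]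
  -- the split point `a`, where `K a² = 1`
  set a := K ^ (-(1 / 2) : ℝ) with ha_def
  have ha : 0 < a := Real.rpow_pos_of_pos hK _
  have hapow : ∀ t : ℝ, a ^ t = K ^ (-(t / 2)) := fun t => by
    rw [ha_def, ← Real.rpow_mul hK.le]; ring_nf
  have hnear : ∫⁻ r in Ioc 0 a, ENNReal.ofReal r *
      ENNReal.ofReal (min 4 (K * r ^ 2) / (r ^ 2) ^ (1 + β)) ≤
      ENNReal.ofReal (1 / (2 - 2 * β) * K ^ β) := by
    calc _ ≤ ∫⁻ r in Ioc 0 a, ENNReal.ofReal K * ENNReal.ofReal (r ^ (1 - 2 * β)) :=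
          setLIntegral_mono (by fun_prop) fun r hr => by
            rw [hprofile r hr.1, ← ENNReal.ofReal_mul hK.le]
            exact ENNReal.ofReal_le_ofReal (min_le_right _ _)
      _ = ENNReal.ofReal (1 / (2 - 2 * β) * K ^ β) := by
          rw [lintegral_const_mul _ (by fun_prop), lintegral_Ioc_zero_rpow ha.le (by linarith),
            ← ENNReal.ofReal_mul hK.le, hapow]
          congr 1
          rw [mul_div_assoc', mul_comm, ← Real.rpow_add_one hK.ne']
          ring_nf
  have hfar : ∫⁻ r in Ioi a, ENNReal.ofReal r *
      ENNReal.ofReal (min 4 (K * r ^ 2) / (r ^ 2) ^ (1 + β)) ≤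
      ENNReal.ofReal (2 / β * K ^ β) := by
    calc _ ≤ ∫⁻ r in Ioi a, ENNReal.ofReal 4 * ENNReal.ofReal (r ^ (-(1 + 2 * β))) :=
          setLIntegral_mono (by fun_prop) fun r (hr : a < r) => by
            rw [hprofile r (ha.trans hr), ← ENNReal.ofReal_mul zero_le_four]
            exact ENNReal.ofReal_le_ofReal (min_le_left _ _)
      _ = ENNReal.ofReal (2 / β * K ^ β) := by
          rw [lintegral_const_mul _ (by fun_prop), lintegral_Ioi_rpow ha (by linarith),
            ← ENNReal.ofReal_mul zero_le_four, hapow]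
          congr 1
          field_simp
          ring_nf
  rw [← Ioc_union_Ioi_eq_Ioi ha.le, lintegral_union measurableSet_Ioi Ioc_disjoint_Ioi_same,
    add_mul, ENNReal.ofReal_add
      (mul_nonneg (one_div_nonneg.2 (by linarith)) (Real.rpow_nonneg hK.le _)) (by positivity)]
  exact add_le_add hnear hfar

/-- **Kernel integral bound.**
For `β ∈ (0,1)` there is a constant `c_β > 0` such that for all `k₁ ∈ ℝ` and `k₂ > 0`,
`I(k₁,k₂,β) = ∫_{z₁∈ℝ} ∫_{z₂>0} |e^{i k₁ z₁ - k₂ z₂} - 1|² / (z₁²+z₂²)^{1+β} dz₂ dz₁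
  ≤ c_β (k₁² + k₂²)^β`. -/
theorem kernel_integral_bound (β : ℝ) (hβ : β ∈ Ioo (0:ℝ) 1) :
    ∃ c : ℝ, 0 < c ∧ ∀ k₁ : ℝ, ∀ k₂ : ℝ, 0 < k₂ →
      (∫ z₁ : ℝ, ∫ z₂ in Ioi (0:ℝ),
          ‖Complex.exp (Complex.I * (k₁:ℂ) * (z₁:ℂ) - (k₂:ℂ) * (z₂:ℂ)) - 1‖ ^ 2 /
            (z₁ ^ 2 + z₂ ^ 2) ^ (1 + β))
        ≤ c * (k₁ ^ 2 + k₂ ^ 2) ^ β := by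
  have hc : 0 < 2 * Real.pi * (1 / (2 - 2 * β) + 2 / β) :=
    mul_pos (by positivity)
      (add_pos (one_div_pos.2 (by linarith [hβ.2])) (div_pos two_pos hβ.1))
  refine ⟨_, hc, fun k₁ k₂ hk₂ => ?_⟩
  set K := k₁ ^ 2 + k₂ ^ 2
  have hK : 0 < K := by positivity
  set h : ℝ → ℝ≥0∞ := fun t => ENNReal.ofReal (min 4 (K * t) / t ^ (1 + β))
  refine integral_integral_le_of_lintegral_lintegral_enorm_le
    (mul_nonneg hc.le (Real.rpow_nonneg hK.le _)) ?_
  calc _ ≤ ∫⁻ z₁ : ℝ, ∫⁻ z₂ in Ioi 0, h (z₁ ^ 2 + z₂ ^ 2) :=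
        lintegral_mono fun z₁ => setLIntegral_mono (by fun_prop) fun z₂ (hz₂ : 0 < z₂) => by
          rw [Real.enorm_eq_ofReal (by positivity)]
          exact ENNReal.ofReal_le_ofReal (div_le_div_of_nonneg_right
            (sq_norm_exp_sub_one_le_min k₁ k₂ z₁ z₂ (by positivity)) (by positivity))
    _ ≤ ∫⁻ z₁ : ℝ, ∫⁻ z₂ : ℝ, h (z₁ ^ 2 + z₂ ^ 2) :=
        lintegral_mono fun z₁ => setLIntegral_le_lintegral _ _
    _ = ∫⁻ p : ℝ × ℝ, h (p.1 ^ 2 + p.2 ^ 2) :=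
        (lintegral_prod (fun p : ℝ × ℝ => h (p.1 ^ 2 + p.2 ^ 2)) (by fun_prop)).symm
    _ = ENNReal.ofReal (2 * Real.pi) * ∫⁻ r in Ioi 0, ENNReal.ofReal r * h (r ^ 2) :=
        lintegral_comp_sq_add_sq (by fun_prop)
    _ ≤ ENNReal.ofReal (2 * Real.pi) * ENNReal.ofReal ((1 / (2 - 2 * β) + 2 / β) * K ^ β) := by
        gcongr
        exact lintegral_Ioi_mul_min_div_rpow_le hβ hK
    _ = ENNReal.ofReal (2 * Real.pi * (1 / (2 - 2 * β) + 2 / β) * K ^ β) := by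
        rw [← ENNReal.ofReal_mul (by positivity), ← mul_assoc]
end

section
/- Scaling identity and finiteness of the polar integral: For $\beta\in(0,1)$ and $\lambda\in[0,1]$, the integral $J_1(\lambda,\beta)=\int_{\theta=0}^\pi\int_{r=0}^\infty\frac{|e^{(i\cos\theta-\lambda\sin\theta)r}-1|^2}{r^{1+2\beta}}\,dr\,d\theta$ is finite. Moreover, for every $k_1>0$, $\int_{z_1\in\mathbb{R}}\int_{z_2=0}^\infty\frac{|e^{ik_1z_1-\lambda k_1z_2}-1|^2}{(z_1^2+z_2^2)^{1+\beta}}\,dz_2\,dz_1=(k_1^2)^{\beta}\,J_1(\lambda,\beta)$ (for $\lambda\in(0,1]$). -/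
/-!
In polar coordinates `z = (r cos θ, r sin θ)` on the upper half-plane, the area element `r dr dθ`
and the denominator `r ^ (2 + 2β)` combine into `r ^ -(1 + 2β)`, and the exponent becomes
`(i cos θ - l sin θ) k₁ r`; the substitution `r ↦ r / k₁` then pulls out `k₁ ^ (2β)`.
Finiteness holds because `|e^w - 1| ≤ 2 min(1, |w|)` when `Re w ≤ 0`, so the integrand is
dominated by a multiple of `min(1, r)² / r ^ (1 + 2β)`, integrable at `0` as `β < 1` and at `∞`
as `β > 0`.
-/

open MeasureTheory Set Real

theorem Complex.norm_exp_sub_one_le_two_mul_min {w : ℂ} (hw : w.re ≤ 0) :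
    ‖exp w - 1‖ ≤ 2 * min 1 ‖w‖ := by
  rcases le_total ‖w‖ 1 with h | h
  · rw [min_eq_right h]
    exact norm_exp_sub_one_le h
  · rw [min_eq_left h, mul_one]
    calc ‖exp w - 1‖ ≤ ‖exp w‖ + ‖(1 : ℂ)‖ := norm_sub_le _ _
      _ ≤ 1 + 1 := by
        rw [norm_exp, norm_one]
        gcongr
        exact Real.exp_le_one_iff.mpr hw
      _ = 2 := one_add_one_eq_two

theorem Complex.norm_exp_mul_ofReal_sub_one_le {u : ℂ} {c r : ℝ} (hc : 1 ≤ c) (hu : ‖u‖ ≤ c)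
    (hu_re : u.re ≤ 0) (hr : 0 ≤ r) : ‖exp (u * r) - 1‖ ≤ 2 * c * min 1 r := by
  have hre : (u * r).re ≤ 0 := by
    rw [re_mul_ofReal]
    exact mul_nonpos_of_nonpos_of_nonneg hu_re hr
  calc ‖exp (u * r) - 1‖ ≤ 2 * min 1 ‖u * r‖ := norm_exp_sub_one_le_two_mul_min hre
    _ ≤ 2 * min 1 (c * r) := by
      rw [norm_mul, norm_real, Real.norm_of_nonneg hr]
      gcongr
    _ ≤ 2 * (c * min 1 r) := by
      rw [mul_min_of_nonneg _ _ (zero_le_one.trans hc), mul_one]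
      exact mul_le_mul_of_nonneg_left (min_le_min hc le_rfl) zero_le_two
    _ = 2 * c * min 1 r := (mul_assoc _ _ _).symm

theorem integrableOn_Ioi_min_one_sq_div_rpow {p : ℝ} (hp₁ : 1 < p) (hp₃ : p < 3) :
    IntegrableOn (fun r : ℝ => min 1 r ^ 2 / r ^ p) (Ioi 0) := by
  rw [← Ioc_union_Ioi_eq_Ioi zero_le_one]
  refine IntegrableOn.union ?_ ?_
  · have h : IntegrableOn (fun r : ℝ => r ^ (2 - p)) (Ioc 0 1) := by
      rw [← intervalIntegrable_iff_integrableOn_Ioc_of_le zero_le_one]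
      exact intervalIntegral.intervalIntegrable_rpow' (by linarith)
    refine h.congr_fun (fun r hr => ?_) measurableSet_Ioc
    rw [min_eq_right hr.2, ← rpow_natCast, ← rpow_sub hr.1]
    norm_num
  · have h : IntegrableOn (fun r : ℝ => r ^ (-p)) (Ioi 1) :=
      (integrableOn_Ioi_rpow_iff one_pos).mpr (by linarith)
    refine h.congr_fun (fun r hr => ?_) measurableSet_Ioi
    dsimp only
    rw [min_eq_left (le_of_lt hr), one_pow, one_div, rpow_neg (zero_le_one.trans (le_of_lt hr))]

theorem integral_Ioi_comp_mul_left_div_rpow (g : ℝ → ℝ) {k : ℝ} (hk : 0 < k) (p : ℝ) :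
    ∫ r in Ioi 0, g (k * r) / r ^ p = k ^ (p - 1) * ∫ r in Ioi 0, g r / r ^ p := by
  have h : ∀ r ∈ Ioi (0 : ℝ), g (k * r) / r ^ p = k ^ p * (g (k * r) / (k * r) ^ p) := by
    intro r hr
    rw [mul_rpow hk.le (le_of_lt hr)]
    field_simp
  rw [setIntegral_congr_fun measurableSet_Ioi h, integral_const_mul,
    integral_comp_mul_left_Ioi (fun s => g s / s ^ p) 0 hk, mul_zero, smul_eq_mul, ← mul_assoc,
    rpow_sub_one hk.ne', div_eq_mul_inv]

section UpperHalfPlane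

variable {E : Type*} [NormedAddCommGroup E] [NormedSpace ℝ E]

theorem polarCoord_symm_image_Ioi_prod_Ioo :
    polarCoord.symm '' (Ioi 0 ×ˢ Ioo 0 π) = univ ×ˢ Ioi 0 := by
  ext z
  constructor
  · rintro ⟨⟨r, θ⟩, ⟨hr, hθ⟩, rfl⟩
    exact ⟨mem_univ _, mul_pos hr (sin_pos_of_pos_of_lt_pi hθ.1 hθ.2)⟩
  · rintro ⟨-, hy⟩
    have hz : z ∈ polarCoord.source := Or.inr (ne_of_gt hy)
    obtain ⟨hr, hθ⟩ := polarCoord.map_source hz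
    refine ⟨polarCoord z, ⟨hr, ?_, hθ.2⟩, polarCoord.left_inv hz⟩
    by_contra! hθ_nonpos
    have hy' : z.2 = (polarCoord z).1 * sin (polarCoord z).2 :=
      congrArg Prod.snd (polarCoord.left_inv hz).symm
    have := mul_nonpos_of_nonneg_of_nonpos (le_of_lt hr)
      (sin_nonpos_of_nonpos_of_neg_pi_le hθ_nonpos hθ.1.le)
    exact (hy'.trans_le this).not_gt hy

theorem injOn_polarCoord_symm_Ioi_prod_Ioo : InjOn polarCoord.symm (Ioi 0 ×ˢ Ioo 0 π) :=
  polarCoord.symm.injOn.mono (prod_mono subset_rfl (Ioo_subset_Ioo_left (by linarith [pi_pos])))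

theorem measurePreserving_swap_volume :
    MeasurePreserving (Prod.swap : ℝ × ℝ → ℝ × ℝ) :=
  Measure.measurePreserving_swap

theorem integrableOn_upperHalfPlane_iff_polar (f : ℝ × ℝ → E) :
    IntegrableOn f (univ ×ˢ Ioi 0) ↔
      IntegrableOn (fun q : ℝ × ℝ => q.2 • f (q.2 * cos q.1, q.2 * sin q.1))
        (Ioo 0 π ×ˢ Ioi 0) := by
  rw [← polarCoord_symm_image_Ioi_prod_Ioo, integrableOn_image_iff_integrableOn_abs_det_fderiv_smul
    volume (measurableSet_Ioi.prod measurableSet_Ioo)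
    (fun p _ => (hasFDerivAt_polarCoord_symm p).hasFDerivWithinAt)
    injOn_polarCoord_symm_Ioi_prod_Ioo, ← measurePreserving_swap_volume.integrableOn_comp_preimage
    MeasurableEquiv.prodComm.measurableEmbedding, preimage_swap_prod]
  refine integrableOn_congr_fun (fun q hq => ?_) (measurableSet_Ioo.prod measurableSet_Ioi)
  simp [det_fderivPolarCoordSymm, abs_of_pos (mem_Ioi.mp hq.2)]

theorem setIntegral_upperHalfPlane_eq_polar (f : ℝ × ℝ → E) :
    ∫ z in univ ×ˢ Ioi 0, f z =
      ∫ q in Ioo 0 π ×ˢ Ioi 0, q.2 • f (q.2 * cos q.1, q.2 * sin q.1) := by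
  rw [← polarCoord_symm_image_Ioi_prod_Ioo, integral_image_eq_integral_abs_det_fderiv_smul
    volume (measurableSet_Ioi.prod measurableSet_Ioo)
    (fun p _ => (hasFDerivAt_polarCoord_symm p).hasFDerivWithinAt)
    injOn_polarCoord_symm_Ioi_prod_Ioo, ← measurePreserving_swap_volume.setIntegral_preimage_emb
    MeasurableEquiv.prodComm.measurableEmbedding, preimage_swap_prod]
  refine setIntegral_congr_fun (measurableSet_Ioo.prod measurableSet_Ioi) (fun q hq => ?_)
  simp [det_fderivPolarCoordSymm, abs_of_pos (mem_Ioi.mp hq.2)]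

end UpperHalfPlane

noncomputable def polarNumerator (l θ s : ℝ) : ℝ :=
  ‖Complex.exp ((Complex.I * Real.cos θ - (l:ℂ) * Real.sin θ) * (s:ℂ)) - 1‖ ^ 2

theorem polarNumerator_mul_le {l k θ r : ℝ} (hl : 0 ≤ l) (hk : 0 ≤ k) (hθ : θ ∈ Icc 0 π)
    (hr : 0 ≤ r) : polarNumerator l θ (k * r) ≤ (2 * ((1 + l) * (1 + k)) * min 1 r) ^ 2 := by
  set u : ℂ := (Complex.I * Real.cos θ - (l:ℂ) * Real.sin θ) * k
  have hu_re : u.re ≤ 0 := by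
    have : 0 ≤ l * sin θ * k := by
      have := sin_nonneg_of_nonneg_of_le_pi hθ.1 hθ.2
      positivity
    have : u.re = -(l * sin θ * k) := by
      simp only [u, Complex.mul_re, Complex.sub_re, Complex.sub_im, Complex.mul_im,
        Complex.I_re, Complex.I_im, Complex.ofReal_re, Complex.ofReal_im]
      ring
    linarith
  have hu : ‖u‖ ≤ (1 + l) * (1 + k) := by
    have hsum : ‖Complex.I * Real.cos θ - (l:ℂ) * Real.sin θ‖ ≤ 1 + l :=
      calc _ ≤ ‖Complex.I * Real.cos θ‖ + ‖(l:ℂ) * Real.sin θ‖ := norm_sub_le _ _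
        _ = |cos θ| + l * |sin θ| := by
          simp only [norm_mul, Complex.norm_I, Complex.norm_real, Real.norm_eq_abs, one_mul,
            abs_of_nonneg hl]
        _ ≤ 1 + l * 1 :=
          add_le_add (abs_cos_le_one θ) (mul_le_mul_of_nonneg_left (abs_sin_le_one θ) hl)
        _ = 1 + l := by ring
    calc ‖u‖ = ‖Complex.I * Real.cos θ - (l:ℂ) * Real.sin θ‖ * k := by
          simp only [u, norm_mul, Complex.norm_real, Real.norm_of_nonneg hk]
      _ ≤ (1 + l) * (1 + k) := by gcongr; linarith
  have h := Complex.norm_exp_mul_ofReal_sub_one_le (by nlinarith) hu hu_re hr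
  unfold polarNumerator
  rw [Complex.ofReal_mul, ← mul_assoc]
  gcongr

theorem integrableOn_polarNumerator_mul_div_rpow {l k p : ℝ} (hl : 0 ≤ l) (hk : 0 ≤ k)
    (hp₁ : 1 < p) (hp₃ : p < 3) :
    IntegrableOn (fun q : ℝ × ℝ => polarNumerator l q.1 (k * q.2) / q.2 ^ p)
      (Ioo 0 π ×ˢ Ioi 0) := by
  set C := (2 * ((1 + l) * (1 + k))) ^ 2
  have hdom : IntegrableOn (fun q : ℝ × ℝ => C * (min 1 q.2 ^ 2 / q.2 ^ p))
      (Ioo 0 π ×ˢ Ioi 0) := by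
    rw [IntegrableOn, Measure.volume_eq_prod, ← Measure.prod_restrict]
    exact Integrable.mul_prod (f := fun _ => C) (integrableOn_const measure_Ioo_lt_top.ne)
      (integrableOn_Ioi_min_one_sq_div_rpow hp₁ hp₃)
  refine hdom.mono' ?_ ((ae_restrict_mem (measurableSet_Ioo.prod measurableSet_Ioi)).mono ?_)
  · exact Measurable.aestronglyMeasurable (by unfold polarNumerator; fun_prop)
  · rintro ⟨θ, r⟩ ⟨hθ, hr⟩
    have hr : 0 < r := hr
    rw [Real.norm_of_nonneg (by unfold polarNumerator; positivity), mul_div_assoc', ← mul_pow]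
    gcongr
    exact polarNumerator_mul_le hl hk (Ioo_subset_Icc_self hθ) hr.le

noncomputable def halfPlaneIntegrand (β l k : ℝ) (z : ℝ × ℝ) : ℝ :=
  ‖Complex.exp (Complex.I * k * z.1 - l * k * z.2) - 1‖ ^ 2 / (z.1 ^ 2 + z.2 ^ 2) ^ (1 + β)

theorem halfPlaneIntegrand_polar_eqOn (β l k : ℝ) :
    EqOn (fun q : ℝ × ℝ => q.2 • halfPlaneIntegrand β l k (q.2 * cos q.1, q.2 * sin q.1))
      (fun q => polarNumerator l q.1 (k * q.2) / q.2 ^ (1 + 2 * β)) (Ioo 0 π ×ˢ Ioi 0) := by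
  rintro ⟨θ, r⟩ ⟨-, hr⟩
  have hr : 0 < r := hr
  have hexp : Complex.I * k * ((r * cos θ : ℝ) : ℂ) - l * k * ((r * sin θ : ℝ) : ℂ) =
      (Complex.I * cos θ - l * sin θ) * ((k * r : ℝ) : ℂ) := by
    push_cast
    ring
  have hden : ((r * cos θ) ^ 2 + (r * sin θ) ^ 2) ^ (1 + β) = r * r ^ (1 + 2 * β) := by
    rw [mul_pow, mul_pow, ← mul_add, cos_sq_add_sin_sq, mul_one, ← rpow_natCast,
      ← rpow_mul hr.le, show ((2 : ℕ) : ℝ) * (1 + β) = 1 + (1 + 2 * β) by push_cast; ring,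
      rpow_add hr, rpow_one]
  simp only [halfPlaneIntegrand, polarNumerator, smul_eq_mul]
  rw [hexp, hden]
  field_simp

theorem integrableOn_halfPlaneIntegrand {β l k : ℝ} (hβ : β ∈ Ioo 0 1) (hl : 0 ≤ l)
    (hk : 0 ≤ k) : IntegrableOn (halfPlaneIntegrand β l k) (univ ×ˢ Ioi 0) :=
  (integrableOn_upperHalfPlane_iff_polar _).2 <|
    (integrableOn_polarNumerator_mul_div_rpow hl hk (by linarith [hβ.1])
      (by linarith [hβ.2])).congr_fun (halfPlaneIntegrand_polar_eqOn β l k).symm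
        (measurableSet_Ioo.prod measurableSet_Ioi)

theorem setIntegral_halfPlaneIntegrand_eq_polar (β l k : ℝ) :
    ∫ z in univ ×ˢ Ioi 0, halfPlaneIntegrand β l k z =
      ∫ q in Ioo 0 π ×ˢ Ioi 0, polarNumerator l q.1 (k * q.2) / q.2 ^ (1 + 2 * β) := by
  rw [setIntegral_upperHalfPlane_eq_polar]
  exact setIntegral_congr_fun (measurableSet_Ioo.prod measurableSet_Ioi)
    (halfPlaneIntegrand_polar_eqOn β l k)

/-- **Scaling identity and finiteness of the polar integral.**
For `β ∈ (0,1)` and `l ∈ [0,1]`, the polar integral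
`J₁(l,β) = ∫_{θ=0}^π ∫_{r=0}^∞ |e^{(i cos θ - l sin θ) r} - 1|² / r^{1+2β} dr dθ`
is finite (i.e. the integrand is integrable on `(0,π) × (0,∞)`); moreover, if
`l ∈ (0,1]`, then for every `k₁ > 0`,
`∫_{z₁∈ℝ} ∫_{z₂>0} |e^{i k₁ z₁ - l k₁ z₂} - 1|² / (z₁²+z₂²)^{1+β} dz₂ dz₁
  = (k₁²)^β · J₁(l,β)`. -/
theorem polar_integral_finite_and_scaling (β l : ℝ) (hβ : β ∈ Ioo (0:ℝ) 1)
    (hl : l ∈ Icc (0:ℝ) 1) :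
    IntegrableOn
      (fun p : ℝ × ℝ =>
        ‖Complex.exp ((Complex.I * Real.cos p.1 - (l:ℂ) * Real.sin p.1) * (p.2:ℂ)) - 1‖ ^ 2 /
          p.2 ^ (1 + 2*β))
      (Ioo (0:ℝ) Real.pi ×ˢ Ioi (0:ℝ)) ∧
    (0 < l →
      ∀ k₁ : ℝ, 0 < k₁ →
        (∫ z₁ : ℝ, ∫ z₂ in Ioi (0:ℝ),
            ‖Complex.exp (Complex.I * (k₁:ℂ) * (z₁:ℂ) - (l:ℂ) * (k₁:ℂ) * (z₂:ℂ)) - 1‖ ^ 2 /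
              (z₁ ^ 2 + z₂ ^ 2) ^ (1 + β))
          = (k₁ ^ 2) ^ β *
            ∫ θ in Ioo (0:ℝ) Real.pi, ∫ r in Ioi (0:ℝ),
              ‖Complex.exp ((Complex.I * Real.cos θ - (l:ℂ) * Real.sin θ) * (r:ℂ)) - 1‖ ^ 2 /
                r ^ (1 + 2*β)) := by
  have hp₁ : 1 < 1 + 2 * β := by linarith [hβ.1]
  have hp₃ : 1 + 2 * β < 3 := by linarith [hβ.2]
  refine ⟨?_, fun _ k₁ hk₁ => ?_⟩
  · have h := integrableOn_polarNumerator_mul_div_rpow hl.1 zero_le_one hp₁ hp₃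
    simp only [one_mul] at h
    exact h
  have hscale : k₁ ^ (1 + 2 * β - 1) = (k₁ ^ 2) ^ β := by
    rw [← rpow_natCast, ← rpow_mul hk₁.le]
    norm_num
  calc ∫ z₁, ∫ z₂ in Ioi 0, halfPlaneIntegrand β l k₁ (z₁, z₂)
      = ∫ z in univ ×ˢ Ioi 0, halfPlaneIntegrand β l k₁ z := by
        have h := setIntegral_prod _ (integrableOn_halfPlaneIntegrand hβ hl.1 hk₁.le)
        rw [Measure.restrict_univ] at h
        exact h.symm
    _ = ∫ q in Ioo 0 π ×ˢ Ioi 0, polarNumerator l q.1 (k₁ * q.2) / q.2 ^ (1 + 2 * β) :=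
        setIntegral_halfPlaneIntegrand_eq_polar β l k₁
    _ = ∫ θ in Ioo 0 π, ∫ r in Ioi 0, polarNumerator l θ (k₁ * r) / r ^ (1 + 2 * β) :=
        setIntegral_prod _ (integrableOn_polarNumerator_mul_div_rpow hl.1 hk₁.le hp₁ hp₃)
    _ = ∫ θ in Ioo 0 π, (k₁ ^ 2) ^ β * ∫ r in Ioi 0, polarNumerator l θ r / r ^ (1 + 2 * β) := by
        simp_rw [integral_Ioi_comp_mul_left_div_rpow _ hk₁, hscale]
    _ = _ := integral_const_mul _ _
end
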